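/- arXiv:2412.06374 — 3 statements merged into one kernel-verified Lean document; each statement's English description precedes it below -/
import Mathlib

section
/- Any multiplicative function c : ℕ → ℝ_{>0} satisfying c_{nm} = c_n c_m for all n, m and monotonicity must satisfy c_n = n^{ρ} for some ρ ≥ 0. -/
/-- Any multiplicative, monotone nondecreasing function `c : ℕ → ℝ_{>0}` with
`c (n*m) = c n * c m` must be of the form `c n = n ^ ρ` for some `ρ ≥ 0`. -/
theorem stmt_1 (c : ℕ → ℝ)
    (hpos : ∀ n, 1 ≤ n → 0 < c n)
    (hmul : ∀ n m, 1 ≤ n → 1 ≤ m → c (n * m) = c n * c m)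
    (hmono : ∀ n m, 1 ≤ n → n ≤ m → c n ≤ c m) :
    ∃ ρ : ℝ, 0 ≤ ρ ∧ ∀ n, 1 ≤ n → c n = (n : ℝ) ^ ρ := by
  -- c 1 = 1
  have hc1 : c 1 = 1 := by
    have h := hmul 1 1 le_rfl le_rfl
    have h1 := hpos 1 le_rfl
    nlinarith
  -- c n ≥ 1
  have hge1 : ∀ n, 1 ≤ n → 1 ≤ c n := by
    intro n hn
    have := hmono 1 n le_rfl hn
    linarith [hc1 ▸ this]
  -- c (n^k) = (c n)^k
  have hcpow : ∀ n, 1 ≤ n → ∀ k : ℕ, c (n ^ k) = (c n) ^ k := by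
    intro n hn k
    induction k with
    | zero => simpa using hc1
    | succ k ih =>
        have hnk : 1 ≤ n ^ k := Nat.one_le_pow _ _ (by omega)
        rw [pow_succ, hmul (n ^ k) n hnk hn, ih, pow_succ]
  -- key lemma
  have key : ∀ n m : ℕ, 2 ≤ n → 2 ≤ m →
      Real.log (c n) * Real.log m = Real.log (c m) * Real.log n := by
    intro n m hn hm
    set Ln := Real.log (c n) with hLn
    set Lm := Real.log (c m) with hLm
    have hLn0 : 0 ≤ Ln := Real.log_nonneg (hge1 n (by omega))
    have hLm0 : 0 ≤ Lm := Real.log_nonneg (hge1 m (by omega))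
    have hlogn : 0 < Real.log n := Real.log_pos (by exact_mod_cast hn)
    have hlogm : 0 < Real.log m := Real.log_pos (by exact_mod_cast hm)
    have hcn : (0:ℝ) < c n := hpos n (by omega)
    have hcm : (0:ℝ) < c m := hpos m (by omega)
    have hnR : (1:ℝ) < (n:ℝ) := by exact_mod_cast hn.trans_lt' one_lt_two
    have hmR : (1:ℝ) < (m:ℝ) := by exact_mod_cast hm.trans_lt' one_lt_two
    -- the bound for each k
    have bound : ∀ k : ℕ, |(k:ℝ) * (Lm * Real.log n - Real.log m * Ln)|
        ≤ Ln * Real.log n := by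
      intro k
      set a : ℕ := ⌊(k * Real.log m) / Real.log n⌋₊ with ha
      have hfl : (a:ℝ) ≤ (k * Real.log m) / Real.log n :=
        Nat.floor_le (by positivity)
      have hfu : (k * Real.log m) / Real.log n < (a:ℝ) + 1 :=
        Nat.lt_floor_add_one _
      have h1 : (a:ℝ) * Real.log n ≤ k * Real.log m :=
        (le_div_iff₀ hlogn).mp hfl
      have h2 : (k:ℝ) * Real.log m ≤ ((a:ℝ) + 1) * Real.log n := by
        have := (div_lt_iff₀ hlogn).mp hfu
        linarith
      -- nat inequalities n^a ≤ m^k ≤ n^(a+1)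
      have hna : n ^ a ≤ m ^ k := by
        have : ((n:ℝ)) ^ a ≤ ((m:ℝ)) ^ k := by
          rw [← Real.exp_log (x := (n:ℝ)^a) (by positivity),
              ← Real.exp_log (x := (m:ℝ)^k) (by positivity)]
          apply Real.exp_le_exp.mpr
          rw [Real.log_pow, Real.log_pow]
          exact h1
        exact_mod_cast this
      have hmk : m ^ k ≤ n ^ (a + 1) := by
        have : ((m:ℝ)) ^ k ≤ ((n:ℝ)) ^ (a+1) := by
          rw [← Real.exp_log (x := (n:ℝ)^(a+1)) (by positivity),
              ← Real.exp_log (x := (m:ℝ)^k) (by positivity)]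
          apply Real.exp_le_exp.mpr
          rw [Real.log_pow, Real.log_pow]
          push_cast
          linarith
        exact_mod_cast this
      -- translate to c
      have hca : (c n) ^ a ≤ (c m) ^ k := by
        rw [← hcpow n (by omega), ← hcpow m (by omega)]
        exact hmono _ _ (Nat.one_le_pow _ _ (by omega)) hna
      have hck : (c m) ^ k ≤ (c n) ^ (a + 1) := by
        rw [← hcpow n (by omega), ← hcpow m (by omega)]
        exact hmono _ _ (Nat.one_le_pow _ _ (by omega)) hmk
      have h3 : (a:ℝ) * Ln ≤ k * Lm := by
        have := Real.log_le_log (by positivity) hca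
        rw [Real.log_pow, Real.log_pow] at this
        exact_mod_cast this
      have h4 : (k:ℝ) * Lm ≤ ((a:ℝ) + 1) * Ln := by
        have := Real.log_le_log (by positivity) hck
        rw [Real.log_pow, Real.log_pow] at this
        push_cast at this
        linarith
      rw [abs_le]
      constructor <;> nlinarith [mul_le_mul_of_nonneg_right h3 hlogn.le,
        mul_le_mul_of_nonneg_right h4 hlogn.le,
        mul_le_mul_of_nonneg_right h1 hLn0,
        mul_le_mul_of_nonneg_right h2 hLn0]
    -- conclude the difference is zero
    have hd : Lm * Real.log n - Real.log m * Ln = 0 := by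
      by_contra h
      have habs : 0 < |Lm * Real.log n - Real.log m * Ln| := abs_pos.mpr h
      obtain ⟨k, hk⟩ := exists_nat_gt ((Ln * Real.log n) / |Lm * Real.log n - Real.log m * Ln|)
      have hb := bound k
      rw [abs_mul, Nat.abs_cast] at hb
      have : (Ln * Real.log n) / |Lm * Real.log n - Real.log m * Ln| < k := hk
      rw [div_lt_iff₀ habs] at this
      linarith [mul_comm (k:ℝ) |Lm * Real.log n - Real.log m * Ln|]
    linarith
  -- main argument
  by_cases h2 : c 2 = 1
  · refine ⟨0, le_rfl, fun n hn => ?_⟩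
    rw [Real.rpow_zero]
    have hub : c n ≤ 1 := by
      have hle : n ≤ 2 ^ n := (Nat.lt_two_pow_self (n := n)).le
      have := hmono n (2 ^ n) hn hle
      rw [hcpow 2 (by omega) n, h2, one_pow] at this
      exact this
    linarith [hge1 n hn]
  · have hc2 : 1 < c 2 := lt_of_le_of_ne (hge1 2 (by omega)) (Ne.symm h2)
    have hlog2 : 0 < Real.log 2 := Real.log_pos one_lt_two
    refine ⟨Real.log (c 2) / Real.log 2, div_nonneg (Real.log_nonneg hc2.le) hlog2.le, fun n hn => ?_⟩
    rcases eq_or_lt_of_le hn with h1 | h1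
    · rw [← h1]
      simp [hc1]
    · have hn2 : 2 ≤ n := h1
      have hk := key n 2 hn2 le_rfl
      have hcn : (0:ℝ) < c n := hpos n (by omega)
      have hnpos : (0:ℝ) < (n:ℝ) := by exact_mod_cast Nat.lt_of_lt_of_le Nat.zero_lt_one hn
      rw [Real.rpow_def_of_pos hnpos, ← Real.exp_log hcn]
      congr 1
      have h2' : Real.log ((2:ℕ):ℝ) = Real.log 2 := by norm_num
      rw [h2'] at hk
      field_simp
      linarith
end

section
/- If U_1, U_2 are independent uniform random variables on (0,1), then X = sqrt(-2 log U_1) · cos(2π U_2) has the standard normal distribution N(0,1). -/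
/-!
With `R = √(-2 log U₁)` and `Θ = 2π U₂`, the substitution `u = exp (-r² / 2)` shows that `R` has
the Rayleigh density `r e^{-r²/2}` on `(0, ∞)`, while `Θ` is uniform over one period of `cos` and
`sin`. Polar coordinates turn the density `(2π)⁻¹ r e^{-r²/2} dr dθ` of `(R, Θ)` into
`(2π)⁻¹ e^{-(x²+y²)/2} dx dy`, so `(R cos Θ, R sin Θ)` is a pair of independent standard
Gaussians, and `X` is its first coordinate.
-/

open MeasureTheory ProbabilityTheory Real Set
open scoped ENNReal

theorem Function.Periodic.setLIntegral_Ioc_add_eq {k : ℝ → ℝ≥0∞} {T : ℝ} (hT : 0 < T)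
    (hk : Function.Periodic k T) (s t : ℝ) :
    ∫⁻ x in Ioc s (s + T), k x = ∫⁻ x in Ioc t (t + T), k x :=
  haveI := Fact.mk hT
  (AddCircle.lintegral_preimage T s hk.lift).trans (AddCircle.lintegral_preimage T t hk.lift).symm

theorem Function.Periodic.setLIntegral_Ioo_zero_one_comp_mul {k : ℝ → ℝ≥0∞} {T : ℝ}
    (hT : 0 < T) (hk : Function.Periodic k T) (t : ℝ) :
    ∫⁻ v in Ioo 0 1, k (T * v) = ENNReal.ofReal T⁻¹ * ∫⁻ θ in Ioo t (t + T), k θ := by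
  have himage : (T * ·) '' Ioo 0 1 = Ioo 0 T := by
    rw [image_mul_left_Ioo hT, mul_zero, mul_one]
  have hchange := lintegral_image_eq_lintegral_abs_deriv_mul (s := Ioo 0 1) measurableSet_Ioo
    (fun v _ => ((hasDerivAt_id' v).const_mul T).hasDerivWithinAt)
    (mul_right_injective₀ hT.ne').injOn k
  rw [himage, mul_one, abs_of_pos hT, lintegral_const_mul' _ _ ENNReal.ofReal_ne_top] at hchange
  calc ∫⁻ v in Ioo 0 1, k (T * v)
      = ENNReal.ofReal T⁻¹ * ∫⁻ θ in Ioo 0 T, k θ := by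
        rw [hchange, ← mul_assoc, ← ENNReal.ofReal_mul (inv_nonneg.2 hT.le),
          inv_mul_cancel₀ hT.ne', ENNReal.ofReal_one, one_mul]
    _ = ENNReal.ofReal T⁻¹ * ∫⁻ θ in Ioo t (t + T), k θ := by
        rw [setLIntegral_congr Ioo_ae_eq_Ioc, setLIntegral_congr Ioo_ae_eq_Ioc,
          ← zero_add T, hk.setLIntegral_Ioc_add_eq hT 0 t, zero_add]

theorem lintegral_Ioo_comp_sqrt_neg_two_mul_log (h : ℝ → ℝ≥0∞) :
    ∫⁻ u in Ioo 0 1, h √(-2 * log u) =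
      ∫⁻ r in Ioi 0, ENNReal.ofReal (r * exp (-r ^ 2 / 2)) * h r := by
  set e : ℝ → ℝ := fun r => exp (-r ^ 2 / 2)
  have hinv : ∀ r ∈ Ioi (0 : ℝ), √(-2 * log (e r)) = r := fun r hr => by
    rw [log_exp, show -2 * (-r ^ 2 / 2) = r ^ 2 by ring, sqrt_sq (le_of_lt hr)]
  have himage : e '' Ioi 0 = Ioo 0 1 := by
    refine Subset.antisymm ?_ fun u ⟨hu₀, hu₁⟩ => ⟨√(-2 * log u), ?_, ?_⟩
    · rintro _ ⟨r, hr, rfl⟩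
      exact ⟨exp_pos _, exp_lt_one_iff.2 (by nlinarith [mem_Ioi.1 hr])⟩
    · exact sqrt_pos.2 (by linarith [log_neg hu₀ hu₁])
    · simp only [e]
      rw [sq_sqrt (by linarith [log_neg hu₀ hu₁]), show -(-2 * log u) / 2 = log u by ring,
        exp_log hu₀]
  have hderiv : ∀ r, HasDerivAt e (-(r * e r)) r := fun r => by
    have hexponent : HasDerivAt (fun r : ℝ => -r ^ 2 / 2) (-r) r :=
      ((hasDerivAt_pow 2 r).neg.div_const 2).congr_deriv (by push_cast; ring)
    exact hexponent.exp.congr_deriv (by ring)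
  have hinj : InjOn e (Ioi 0) := fun a ha b hb hab => by rw [← hinv a ha, ← hinv b hb, hab]
  rw [← himage, lintegral_image_eq_lintegral_abs_deriv_mul measurableSet_Ioi
    (fun r _ => (hderiv r).hasDerivWithinAt) hinj]
  refine setLIntegral_congr_fun measurableSet_Ioi fun r hr => ?_
  rw [abs_neg, abs_of_pos (mul_pos hr (exp_pos _)), hinv r hr]

namespace ProbabilityTheory

noncomputable def boxMuller (p : ℝ × ℝ) : ℝ × ℝ :=
  polarCoord.symm (√(-2 * log p.1), 2 * π * p.2)

theorem measurable_boxMuller : Measurable boxMuller :=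
  continuous_polarCoord_symm.measurable.comp <|
    (measurable_fst.log.const_mul _).sqrt.prodMk (measurable_snd.const_mul _)

theorem lintegral_gaussianReal_prod_eq_polar {f : ℝ × ℝ → ℝ≥0∞} (hf : Measurable f) :
    ∫⁻ x, f x ∂(gaussianReal 0 1).prod (gaussianReal 0 1) =
      ∫⁻ p in polarCoord.target,
        ENNReal.ofReal ((2 * π)⁻¹ * (p.1 * exp (-p.1 ^ 2 / 2))) * f (polarCoord.symm p) := by
  have hpdf : ∀ x y : ℝ, gaussianPDFReal 0 1 x * gaussianPDFReal 0 1 y =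
      (2 * π)⁻¹ * exp (-(x ^ 2 + y ^ 2) / 2) := fun x y => by
    simp only [gaussianPDFReal, NNReal.coe_one, mul_one, sub_zero]
    rw [← mul_mul_mul_comm, ← exp_add, ← mul_inv, mul_self_sqrt two_pi_pos.le]
    congr 2
    ring
  rw [gaussianReal_of_var_ne_zero _ one_ne_zero, prod_withDensity (measurable_gaussianPDF _ _)
    (measurable_gaussianPDF _ _), ← Measure.volume_eq_prod,
    lintegral_withDensity_eq_lintegral_mul _ (by fun_prop) hf, ← lintegral_comp_polarCoord_symm]
  refine setLIntegral_congr_fun polarCoord.open_target.measurableSet fun p hp => ?_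
  simp only [Pi.mul_apply, gaussianPDF, polarCoord_symm_apply, smul_eq_mul]
  rw [← ENNReal.ofReal_mul (gaussianPDFReal_nonneg _ _ _), hpdf, ← mul_assoc,
    ← ENNReal.ofReal_mul (le_of_lt hp.1)]
  congr 1
  rw [mul_pow, mul_pow, ← mul_add, cos_sq_add_sin_sq, mul_one, mul_left_comm]

theorem map_boxMuller :
    ((volume.restrict (Ioo (0 : ℝ) 1)).prod (volume.restrict (Ioo (0 : ℝ) 1))).map boxMuller
      = (gaussianReal 0 1).prod (gaussianReal 0 1) := by
  refine Measure.ext_of_lintegral _ fun f hf => ?_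
  set K : ℝ → ℝ≥0∞ := fun θ =>
    ∫⁻ r in Ioi 0, ENNReal.ofReal (r * exp (-r ^ 2 / 2)) * f (polarCoord.symm (r, θ))
  have hK : Function.Periodic K (2 * π) := fun θ => by
    simp only [K, polarCoord_symm_apply, cos_add_two_pi, sin_add_two_pi]
  calc ∫⁻ x, f x ∂((volume.restrict (Ioo 0 1)).prod (volume.restrict (Ioo 0 1))).map boxMuller
      = ∫⁻ v in Ioo 0 1, ∫⁻ u in Ioo 0 1, f (boxMuller (u, v)) := by
        rw [lintegral_map hf measurable_boxMuller, lintegral_prod_symm (fun p => f (boxMuller p))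
          (hf.comp measurable_boxMuller).aemeasurable]
    _ = ∫⁻ v in Ioo 0 1, K (2 * π * v) :=
        lintegral_congr fun v =>
          lintegral_Ioo_comp_sqrt_neg_two_mul_log fun r => f (polarCoord.symm (r, 2 * π * v))
    _ = ENNReal.ofReal (2 * π)⁻¹ * ∫⁻ θ in Ioo (-π) π, K θ := by
        rw [hK.setLIntegral_Ioo_zero_one_comp_mul two_pi_pos (-π), show -π + 2 * π = π by ring]
    _ = ∫⁻ p in polarCoord.target,
          ENNReal.ofReal ((2 * π)⁻¹ * (p.1 * exp (-p.1 ^ 2 / 2))) * f (polarCoord.symm p) := by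
        rw [polarCoord_target, Measure.volume_eq_prod, ← Measure.prod_restrict,
          lintegral_prod_symm _ (by fun_prop), ← lintegral_const_mul' _ _ ENNReal.ofReal_ne_top]
        refine lintegral_congr fun θ => ?_
        rw [← lintegral_const_mul' _ _ ENNReal.ofReal_ne_top]
        refine lintegral_congr fun r => ?_
        rw [← mul_assoc, ← ENNReal.ofReal_mul (inv_nonneg.2 two_pi_pos.le)]
    _ = ∫⁻ x, f x ∂(gaussianReal 0 1).prod (gaussianReal 0 1) :=
        (lintegral_gaussianReal_prod_eq_polar hf).symm

end ProbabilityTheory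

/-- Box–Muller: if `U₁, U₂` are independent uniform on `(0,1)`, then
`√(-2 log U₁) · cos(2π U₂)` is standard normal. -/
theorem stmt_16 {Ω : Type*} [MeasurableSpace Ω] (μ : Measure Ω) [IsProbabilityMeasure μ]
    (U₁ U₂ : Ω → ℝ) (hU₁_meas : Measurable U₁) (hU₂_meas : Measurable U₂)
    (hU₁ : μ.map U₁ = volume.restrict (Set.Ioo (0 : ℝ) 1))
    (hU₂ : μ.map U₂ = volume.restrict (Set.Ioo (0 : ℝ) 1))
    (hindep : IndepFun U₁ U₂ μ) :
    μ.map (fun ω => Real.sqrt (-2 * Real.log (U₁ ω)) * Real.cos (2 * π * U₂ ω))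
      = gaussianReal 0 1 := by
  have hpair : μ.map (fun ω => (U₁ ω, U₂ ω)) =
      (volume.restrict (Ioo (0 : ℝ) 1)).prod (volume.restrict (Ioo (0 : ℝ) 1)) := by
    rw [(indepFun_iff_map_prod_eq_prod_map_map hU₁_meas.aemeasurable
      hU₂_meas.aemeasurable).mp hindep, hU₁, hU₂]
  calc μ.map (fun ω => Real.sqrt (-2 * Real.log (U₁ ω)) * Real.cos (2 * π * U₂ ω))
      = ((μ.map (fun ω => (U₁ ω, U₂ ω))).map boxMuller).map Prod.fst := by
        rw [Measure.map_map measurable_boxMuller (hU₁_meas.prodMk hU₂_meas),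
          Measure.map_map measurable_fst (measurable_boxMuller.comp (hU₁_meas.prodMk hU₂_meas))]
        rfl
    _ = gaussianReal 0 1 := by
        rw [hpair, map_boxMuller, Measure.map_fst_prod, measure_univ, one_smul]
end

section
/- For α ∈ (0,1), A > 0, P > 0 and t > 0, if φ_t(u) = exp(t ∫_0^∞ (e^{iux} - 1) P e^{-Ax} x^{-1-α} dx) then φ_t(u) = exp(t P Γ(-α)((A - iu)^α - A^α)) for all u ∈ ℝ, where (A - iu)^α is the principal branch. -/
/-!
Both sides vanish at `u = 0`, so it suffices to compare derivatives in `u`. Differentiating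
under the integral sign turns the left side into `i ∫ x^{-α} e^{-(A - iu)x} dx`, a Gamma
integral with the complex rate `A - iu`; it equals `Γ(1-α) (A - iu)^{α-1}`, which is also the
derivative of the right side because `Γ(1-α) = -α Γ(-α)`. The Gamma integral with complex rate
`b` is obtained from the real one (`b = Re b`) by moving `b` along the vertical line
`Re b - iv`: integration by parts shows that the integral times `(Re b - iv)^s` is constant in `v`.
-/

open Complex Real MeasureTheory Set Filter Topology

section GammaIntegral

variable {s c : ℂ}

lemma norm_cpow_mul_cexp_neg_mul {x : ℝ} (hx : 0 < x) (s c : ℂ) :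
    ‖(x : ℂ) ^ s * cexp (-(c * x))‖ = x ^ s.re * rexp (-(c.re * x)) := by
  rw [norm_mul, norm_cpow_eq_rpow_re_of_pos hx, norm_exp]
  simp

lemma continuousOn_cpow_mul_cexp_neg_mul (s c : ℂ) :
    ContinuousOn (fun x : ℝ => (x : ℂ) ^ s * cexp (-(c * x))) (Ioi 0) := fun x hx =>
  (((continuousAt_cpow_const (ofReal_mem_slitPlane.2 hx)).comp continuous_ofReal.continuousAt).mul
    (by fun_prop)).continuousWithinAt

lemma integrableOn_cpow_mul_cexp_neg_mul (hs : -1 < s.re) (hc : 0 < c.re) :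
    IntegrableOn (fun x : ℝ => (x : ℂ) ^ s * cexp (-(c * x))) (Ioi 0) := by
  refine (integrableOn_rpow_mul_exp_neg_mul_rpow hs one_pos hc).mono'
    ((continuousOn_cpow_mul_cexp_neg_mul s c).aestronglyMeasurable measurableSet_Ioi) ?_
  filter_upwards [ae_restrict_mem measurableSet_Ioi] with x hx
  rw [norm_cpow_mul_cexp_neg_mul hx, Real.rpow_one, neg_mul]

lemma tendsto_cpow_mul_cexp_neg_mul_nhdsGT_zero (hs : 0 < s.re) :
    Tendsto (fun x : ℝ => (x : ℂ) ^ s * cexp (-(c * x))) (𝓝[>] 0) (𝓝 0) := by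
  have hlim : Tendsto (fun x : ℝ => x ^ s.re * rexp (-(c.re * x))) (𝓝 0) (𝓝 0) := by
    have := (Real.continuousAt_rpow_const 0 s.re (Or.inr hs.le)).tendsto.mul
      ((by fun_prop : Continuous fun x : ℝ => rexp (-(c.re * x))).tendsto 0)
    simpa [Real.zero_rpow hs.ne'] using this
  refine squeeze_zero_norm' ?_ (hlim.mono_left nhdsWithin_le_nhds)
  filter_upwards [self_mem_nhdsWithin] with x hx
  exact (norm_cpow_mul_cexp_neg_mul hx s c).le

lemma tendsto_cpow_mul_cexp_neg_mul_atTop (hc : 0 < c.re) :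
    Tendsto (fun x : ℝ => (x : ℂ) ^ s * cexp (-(c * x))) atTop (𝓝 0) := by
  refine squeeze_zero_norm' ?_ (tendsto_rpow_mul_exp_neg_mul_atTop_nhds_zero s.re c.re hc)
  filter_upwards [eventually_gt_atTop 0] with x hx
  rw [norm_cpow_mul_cexp_neg_mul hx, neg_mul]

lemma mul_integral_cpow_mul_cexp_neg_mul (hs : 0 < s.re) (hc : 0 < c.re) :
    c * ∫ x : ℝ in Ioi 0, (x : ℂ) ^ s * cexp (-(c * x)) =
      s * ∫ x : ℝ in Ioi 0, (x : ℂ) ^ (s - 1) * cexp (-(c * x)) := by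
  have hu : ∀ x ∈ Ioi (0 : ℝ), HasDerivAt (fun x : ℝ => (x : ℂ) ^ s) (s * (x : ℂ) ^ (s - 1)) x :=
    fun x hx => by
      simpa using ((hasDerivAt_id (x : ℂ)).cpow_const (ofReal_mem_slitPlane.2 hx)).comp_ofReal
  have hv : ∀ x : ℝ, HasDerivAt (fun x : ℝ => cexp (-(c * x))) (-c * cexp (-(c * x))) x :=
    fun x => by
      simpa [mul_comm] using (((hasDerivAt_id (x : ℂ)).const_mul c).neg.cexp).comp_ofReal
  have hs1 := (integrableOn_cpow_mul_cexp_neg_mul (s := s - 1) (by simpa using hs) hc).const_mul s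
  have hs0 := (integrableOn_cpow_mul_cexp_neg_mul (s := s) (by linarith) hc).const_mul (-c)
  have key := integral_Ioi_deriv_mul_eq_sub hu (fun x _ => hv x)
    ((hs1.add hs0).congr (ae_of_all _ fun x => by simp only [Pi.add_apply, Pi.mul_apply]; ring))
    (tendsto_cpow_mul_cexp_neg_mul_nhdsGT_zero hs) (tendsto_cpow_mul_cexp_neg_mul_atTop hc)
  have h0 : ∫ x : ℝ in Ioi 0, (s * ((x : ℂ) ^ (s - 1) * cexp (-(c * x))) +
      -c * ((x : ℂ) ^ s * cexp (-(c * x)))) = 0 := by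
    rw [← sub_self (0 : ℂ), ← key]
    exact integral_congr_ae (ae_of_all _ fun x => by ring)
  rw [integral_add hs1 hs0, integral_const_mul, integral_const_mul] at h0
  linear_combination -h0

lemma sub_I_mul_ofReal_re (c : ℂ) (v : ℝ) : (c - I * v).re = c.re := by simp

lemma hasDerivAt_sub_I_mul_cpow (hc : 0 < c.re) (s : ℂ) (v : ℝ) :
    HasDerivAt (fun v : ℝ => (c - I * v) ^ s) (-I * s * (c - I * v) ^ (s - 1)) v := by
  have hslit : c - I * v ∈ slitPlane := mem_slitPlane_iff.2 (Or.inl (by simpa using hc))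
  convert (((hasDerivAt_id' (v : ℂ)).const_mul I).const_sub c |>.cpow_const hslit).comp_ofReal
    using 1
  ring

lemma hasDerivAt_integral_cpow_mul_cexp_neg_sub_I_mul (hs : 0 < s.re) (hc : 0 < c.re) (v : ℝ) :
    HasDerivAt (fun v : ℝ => ∫ x : ℝ in Ioi 0, (x : ℂ) ^ (s - 1) * cexp (-((c - I * v) * x)))
      (I * ∫ x : ℝ in Ioi 0, (x : ℂ) ^ s * cexp (-((c - I * v) * x))) v := by
  have hc' : ∀ w : ℝ, 0 < (c - I * w).re := fun w => by simpa using hc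
  rw [← integral_const_mul]
  refine (hasDerivAt_integral_of_dominated_loc_of_deriv_le
    (F := fun (w x : ℝ) => (x : ℂ) ^ (s - 1) * cexp (-((c - I * w) * x)))
    (F' := fun (w x : ℝ) => I * ((x : ℂ) ^ s * cexp (-((c - I * w) * x))))
    (bound := fun x : ℝ => ‖(x : ℂ) ^ s * cexp (-(c * x))‖) univ_mem
    (Eventually.of_forall fun w => ?_)
    (integrableOn_cpow_mul_cexp_neg_mul (s := s - 1) (by simpa using hs) (hc' v)) ?_ ?_
    (integrableOn_cpow_mul_cexp_neg_mul (by linarith) hc).norm ?_).2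
  · exact (continuousOn_cpow_mul_cexp_neg_mul _ _).aestronglyMeasurable measurableSet_Ioi
  · exact ((continuousOn_cpow_mul_cexp_neg_mul _ _).aestronglyMeasurable
      measurableSet_Ioi).const_mul _
  · filter_upwards [ae_restrict_mem measurableSet_Ioi] with x hx w _
    rw [norm_mul, norm_I, one_mul, norm_cpow_mul_cexp_neg_mul hx, norm_cpow_mul_cexp_neg_mul hx,
      sub_I_mul_ofReal_re]
  · filter_upwards [ae_restrict_mem measurableSet_Ioi] with x (hx : 0 < x) w _
    have hpow : (x : ℂ) ^ s = (x : ℂ) ^ (s - 1) * x := by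
      conv_lhs => rw [← sub_add_cancel s 1]
      rw [cpow_add _ _ (ofReal_ne_zero.2 hx.ne'), cpow_one]
    refine ((((hasDerivAt_id' (w : ℂ)).const_mul I).const_sub c).mul_const (x : ℂ) |>.neg.cexp
      |>.comp_ofReal).const_mul ((x : ℂ) ^ (s - 1)) |>.congr_deriv ?_
    simp only [Pi.neg_apply, hpow]
    ring

theorem integral_cpow_mul_cexp_neg_mul_Ioi_of_re_pos {b : ℂ} (hs : 0 < s.re) (hb : 0 < b.re) :
    ∫ x : ℝ in Ioi 0, (x : ℂ) ^ (s - 1) * cexp (-(b * x)) = Complex.Gamma s * b ^ (-s) := by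
  set c : ℂ := (b.re : ℂ) with hc_def
  have hc : 0 < c.re := by simpa [hc_def] using hb
  set G : ℝ → ℂ := fun v => ∫ x : ℝ in Ioi 0, (x : ℂ) ^ (s - 1) * cexp (-((c - I * v) * x))
  -- integration by parts gives `G' = I s G / (c - I v)`
  have hderiv : ∀ v, HasDerivAt (fun v => G v * (c - I * v) ^ s) 0 v := by
    intro v
    have hw : c - I * v ≠ 0 := ne_zero_of_re_pos (by simpa using hc)
    have hpow : (c - I * v) ^ s = (c - I * v) ^ (s - 1) * (c - I * v) := by
      conv_lhs => rw [← sub_add_cancel s 1]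
      rw [cpow_add _ _ hw, cpow_one]
    have hparts := mul_integral_cpow_mul_cexp_neg_mul hs (c := c - I * v) (by simpa using hc)
    refine ((hasDerivAt_integral_cpow_mul_cexp_neg_sub_I_mul hs hc v).mul
      (hasDerivAt_sub_I_mul_cpow hc s v)).congr_deriv ?_
    rw [hpow]
    linear_combination (I * (c - I * v) ^ (s - 1)) * hparts
  have hconst := is_const_of_deriv_eq_zero (fun v => (hderiv v).differentiableAt)
    (fun v => (hderiv v).deriv) (-b.im) 0
  have hb_eq : c - I * ((-b.im : ℝ) : ℂ) = b := by
    rw [hc_def, ofReal_neg, mul_neg, sub_neg_eq_add, mul_comm]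
    exact re_add_im b
  have hG0 : G 0 * c ^ s = Complex.Gamma s := by
    have := integral_cpow_mul_exp_neg_mul_Ioi hs hb
    simp only [G, ofReal_zero, mul_zero, sub_zero]
    rw [this, one_div, inv_cpow_ofReal_nonneg hb.le, mul_comm, ← mul_assoc,
      mul_inv_cancel₀ (cpow_ne_zero_iff.2 (Or.inl (by simpa [hc_def] using hb.ne'))), one_mul]
  have hGb : G (-b.im) = ∫ x : ℝ in Ioi 0, (x : ℂ) ^ (s - 1) * cexp (-(b * x)) := by
    simp only [G, hb_eq]
  rw [hb_eq, ofReal_zero, mul_zero, sub_zero] at hconst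
  rw [← hGb, ← hG0, ← hconst, mul_assoc, ← cpow_add _ _ (ne_zero_of_re_pos hb),
    add_neg_cancel, cpow_zero, mul_one]

end GammaIntegral

section TemperedStable

variable {α A : ℝ}

lemma ofReal_mul_cexp_mul_exp_neg_mul_rpow {x : ℝ} (hx : 0 < x) (u : ℝ) :
    (x : ℂ) * cexp (I * u * x) * ↑(rexp (-A * x) * x ^ (-1 - α)) =
      (x : ℂ) ^ ((1 - α : ℂ) - 1) * cexp (-((A - I * u) * x)) := by
  have hx0 : (x : ℂ) ≠ 0 := ofReal_ne_zero.2 hx.ne'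
  have hpow : (x : ℂ) * (x : ℂ) ^ ((-1 - α : ℝ) : ℂ) = (x : ℂ) ^ ((1 - α : ℂ) - 1) := by
    conv_lhs => enter [1]; rw [← cpow_one (x : ℂ)]
    rw [← cpow_add _ _ hx0]
    push_cast
    ring_nf
  rw [ofReal_mul, ofReal_exp, ofReal_cpow hx.le, ← hpow]
  calc (x : ℂ) * cexp (I * u * x) * (cexp (↑(-A * x)) * (x : ℂ) ^ ((-1 - α : ℝ) : ℂ))
      = (x : ℂ) * (x : ℂ) ^ ((-1 - α : ℝ) : ℂ) * (cexp (I * u * x) * cexp (↑(-A * x))) := by ring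
    _ = _ := by
      rw [← Complex.exp_add]
      push_cast
      ring_nf

lemma aestronglyMeasurable_cexp_sub_one_mul (u : ℝ) :
    AEStronglyMeasurable (fun x : ℝ => (cexp (I * u * x) - 1) * ↑(rexp (-A * x) * x ^ (-1 - α)))
      (volume.restrict (Ioi 0)) :=
  (by fun_prop : Measurable fun x : ℝ =>
    (cexp (I * u * x) - 1) * ↑(rexp (-A * x) * x ^ (-1 - α))).aestronglyMeasurable

lemma integrableOn_cexp_sub_one_mul (hα1 : α < 1) (hA : 0 < A) (u : ℝ) :
    IntegrableOn (fun x : ℝ => (cexp (I * u * x) - 1) * ↑(rexp (-A * x) * x ^ (-1 - α)))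
      (Ioi 0) := by
  have hint := (integrableOn_cpow_mul_cexp_neg_mul (s := (1 - α : ℂ) - 1) (c := A)
    (by simpa using hα1) (by simpa using hA)).norm.const_mul |u|
  refine hint.mono' (aestronglyMeasurable_cexp_sub_one_mul u) ?_
  filter_upwards [ae_restrict_mem measurableSet_Ioi] with x (hx : 0 < x)
  have hdens := ofReal_mul_cexp_mul_exp_neg_mul_rpow (α := α) (A := A) hx 0
  simp only [ofReal_zero, mul_zero, zero_mul, Complex.exp_zero, mul_one, sub_zero] at hdens
  have hexp : ‖cexp (I * u * x) - 1‖ ≤ |u| * x := by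
    simpa [mul_assoc, abs_mul, abs_of_pos hx] using
      Real.norm_exp_I_mul_ofReal_sub_one_le (x := u * x)
  rw [← hdens, norm_mul, norm_mul (x : ℂ), norm_real, norm_real, Real.norm_of_nonneg hx.le,
    ← mul_assoc]
  exact mul_le_mul_of_nonneg_right hexp (norm_nonneg _)

lemma hasDerivAt_integral_cexp_sub_one_mul (hα1 : α < 1) (hA : 0 < A) (u : ℝ) :
    HasDerivAt (fun u : ℝ => ∫ x : ℝ in Ioi 0,
        (cexp (I * u * x) - 1) * ↑(rexp (-A * x) * x ^ (-1 - α)))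
      (I * ∫ x : ℝ in Ioi 0, (x : ℂ) ^ ((1 - α : ℂ) - 1) * cexp (-((A - I * u) * x))) u := by
  have hs : -1 < ((1 - α : ℂ) - 1).re := by simpa using hα1
  rw [← integral_const_mul]
  refine (hasDerivAt_integral_of_dominated_loc_of_deriv_le
    (F' := fun (w x : ℝ) => I * ((x : ℂ) ^ ((1 - α : ℂ) - 1) * cexp (-((A - I * w) * x))))
    (bound := fun x : ℝ => ‖(x : ℂ) ^ ((1 - α : ℂ) - 1) * cexp (-((A : ℂ) * x))‖) univ_mem
    (Eventually.of_forall aestronglyMeasurable_cexp_sub_one_mul)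
    (integrableOn_cexp_sub_one_mul hα1 hA u) ?_ ?_
    (integrableOn_cpow_mul_cexp_neg_mul hs (by simpa using hA)).norm ?_).2
  · exact ((continuousOn_cpow_mul_cexp_neg_mul _ _).aestronglyMeasurable
      measurableSet_Ioi).const_mul _
  · filter_upwards [ae_restrict_mem measurableSet_Ioi] with x hx w _
    rw [norm_mul, norm_I, one_mul, norm_cpow_mul_cexp_neg_mul hx, norm_cpow_mul_cexp_neg_mul hx,
      sub_I_mul_ofReal_re]
  · filter_upwards [ae_restrict_mem measurableSet_Ioi] with x (hx : 0 < x) w _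
    refine ((((hasDerivAt_id' (w : ℂ)).const_mul I).mul_const (x : ℂ)).cexp.sub_const 1
      |>.comp_ofReal).mul_const _ |>.congr_deriv ?_
    rw [← ofReal_mul_cexp_mul_exp_neg_mul_rpow hx]
    ring

theorem integral_cexp_sub_one_mul_exp_neg_mul_rpow (hα0 : 0 < α) (hα1 : α < 1) (hA : 0 < A)
    (u : ℝ) :
    ∫ x : ℝ in Ioi 0, (cexp (I * u * x) - 1) * ↑(rexp (-A * x) * x ^ (-1 - α)) =
      ↑(Real.Gamma (-α)) * (((A : ℂ) - I * u) ^ (α : ℂ) - (A : ℂ) ^ (α : ℂ)) := by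
  set Φ : ℝ → ℂ := fun u =>
    ∫ x : ℝ in Ioi 0, (cexp (I * u * x) - 1) * ↑(rexp (-A * x) * x ^ (-1 - α))
  set Ψ : ℝ → ℂ := fun u => ↑(Real.Gamma (-α)) * (((A : ℂ) - I * u) ^ (α : ℂ) - (A : ℂ) ^ (α : ℂ))
  have hGamma : Complex.Gamma (1 - α) = -α * ↑(Real.Gamma (-α)) := by
    rw [← Complex.Gamma_ofReal, sub_eq_neg_add, ofReal_neg,
      Complex.Gamma_add_one _ (by simpa using hα0.ne')]
  have hderiv : ∀ v, HasDerivAt (fun v => Φ v - Ψ v) 0 v := by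
    intro v
    have hΦ := hasDerivAt_integral_cexp_sub_one_mul hα1 hA v
    rw [integral_cpow_mul_cexp_neg_mul_Ioi_of_re_pos (by simpa using hα1) (by simpa using hA),
      hGamma] at hΦ
    refine (hΦ.sub (((hasDerivAt_sub_I_mul_cpow (by simpa using hA) _ v).sub_const _).const_mul
      _)).congr_deriv ?_
    ring_nf
  have hconst := is_const_of_deriv_eq_zero (fun v => (hderiv v).differentiableAt)
    (fun v => (hderiv v).deriv) u 0
  simpa [Φ, Ψ, sub_eq_zero] using hconst

end TemperedStable

theorem stmt_19_general (α A P t : ℝ) (hα0 : 0 < α) (hα1 : α < 1) (hA : 0 < A) :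
    ∀ u : ℝ,
      Complex.exp (↑t * ∫ x in Set.Ioi (0 : ℝ),
          (Complex.exp (Complex.I * ↑u * ↑x) - 1) * ↑(P * Real.exp (-A * x) * x ^ (-1 - α)))
        = Complex.exp (↑(t * P * Real.Gamma (-α)) *
            (((A : ℂ) - Complex.I * ↑u) ^ (α : ℂ) - (A : ℂ) ^ (α : ℂ))) := by
  intro u
  have hP : ∫ x in Ioi (0 : ℝ), (cexp (I * u * x) - 1) * ↑(P * rexp (-A * x) * x ^ (-1 - α)) =
      P * ∫ x in Ioi (0 : ℝ), (cexp (I * u * x) - 1) * ↑(rexp (-A * x) * x ^ (-1 - α)) := by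
    rw [← integral_const_mul]
    congr 1 with x
    push_cast
    ring
  rw [hP, integral_cexp_sub_one_mul_exp_neg_mul_rpow hα0 hα1 hA]
  push_cast
  ring_nf

/-- Lévy–Khintchine exponent of an (uncompensated) tempered stable subordinator,
`α ∈ (0,1)`: `exp(t ∫_0^∞ (e^{iux}-1) P e^{-Ax} x^{-1-α} dx)
  = exp(t P Γ(-α)((A-iu)^α - A^α))`. -/
theorem stmt_19 (α A P t : ℝ) (hα0 : 0 < α) (hα1 : α < 1) (hA : 0 < A) (hP : 0 < P)
    (ht : 0 < t) :
    ∀ u : ℝ,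
      Complex.exp (↑t * ∫ x in Set.Ioi (0 : ℝ),
          (Complex.exp (Complex.I * ↑u * ↑x) - 1) * ↑(P * Real.exp (-A * x) * x ^ (-1 - α)))
        = Complex.exp (↑(t * P * Real.Gamma (-α)) *
            (((A : ℂ) - Complex.I * ↑u) ^ (α : ℂ) - (A : ℂ) ^ (α : ℂ))) :=
  stmt_19_general α A P t hα0 hα1 hA
end
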